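/- arXiv:math/9812030 — 2 statements merged into one kernel-verified Lean document; each statement's English description precedes it below -/
import Mathlib

section
/- Let I, J ⊆ ℝ be intervals, let U : I × J → ℝ be twice continuously differentiable and satisfy U_{θv} = U_θ U_v on I × J, and let θ₋, θ₊ ∈ I and v₀, v ∈ J. Then the jump relation e^{-U(θ₊, v)} − e^{-U(θ₋, v)} = e^{-U(θ₊, v₀)} − e^{-U(θ₋, v₀)} holds; i.e., the jump in e^{-U} across the strip θ₋ ≤ θ ≤ θ₊ is independent of v. -/
open Real

/-- Partial derivative with respect to the first variable `θ`. -/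
noncomputable def pd1 (F : ℝ → ℝ → ℝ) : ℝ → ℝ → ℝ := fun θ v => deriv (fun t => F t v) θ

/-- Partial derivative with respect to the second variable `v`. -/
noncomputable def pd2 (F : ℝ → ℝ → ℝ) : ℝ → ℝ → ℝ := fun θ v => deriv (fun s => F θ s) v

/-! Since `∂_v (U_θ e^{-U}) = (U_{θv} - U_θ U_v) e^{-U} = 0`, the `θ`-derivative `-U_θ e^{-U}` of
`e^{-U}` does not depend on `v`, so `θ ↦ e^{-U(θ,v)} - e^{-U(θ,v')}` is constant. Derivatives are
only taken at interior points of `I × J`; continuity of `U` carries the identities to the boundary,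
and an interval with empty interior is a single point, where there is nothing to prove. -/

open Set Filter Topology

theorem Set.OrdConnected.is_const_of_is_const_interior {α β : Type*} [LinearOrder α]
    [TopologicalSpace α] [OrderTopology α] [DenselyOrdered α] [NoMinOrder α] [NoMaxOrder α]
    [TopologicalSpace β] [T2Space β] {s : Set α} (hs : s.OrdConnected) {f : α → β}
    (hf : ContinuousOn f s) (h : ∀ x ∈ interior s, ∀ y ∈ interior s, f x = f y) :
    ∀ x ∈ s, ∀ y ∈ s, f x = f y := by
  intro x hx y hy
  wlog hxy : x < y generalizing x y
  · rcases (not_lt.1 hxy).eq_or_lt with rfl | hyx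
    · rfl
    · exact (this y hy x hx hyx).symm
  obtain ⟨c, hc⟩ := nonempty_Ioo.2 hxy
  have hIoo : Ioo x y ⊆ interior s := interior_Icc (a := x) ▸ interior_mono (hs.out hx hy)
  have hIcc : EqOn f (fun _ => f c) (Icc x y) :=
    EqOn.of_subset_closure (fun z hz => h z (hIoo hz) c (hIoo hc)) (hf.mono (hs.out hx hy))
      continuousOn_const Ioo_subset_Icc_self (closure_Ioo hxy.ne).ge
  exact (hIcc (left_mem_Icc.2 hxy.le)).trans (hIcc (right_mem_Icc.2 hxy.le)).symm

theorem Set.OrdConnected.is_const_interior_of_hasDerivAt_zero {G : Type*} [NormedAddCommGroup G]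
    [NormedSpace ℝ G] {s : Set ℝ} (hs : s.OrdConnected) {f : ℝ → G}
    (hf : ∀ x ∈ interior s, HasDerivAt f 0 x) :
    ∀ x ∈ interior s, ∀ y ∈ interior s, f x = f y := fun _ hx _ hy =>
  isOpen_interior.is_const_of_deriv_eq_zero hs.interior.isPreconnected
    (fun z hz => (hf z hz).differentiableAt.differentiableWithinAt) (fun z hz => (hf z hz).deriv)
    hx hy

section Partials

variable {F : ℝ → ℝ → ℝ} {θ v : ℝ}

theorem hasDerivAt_pd1 (h : DifferentiableAt ℝ (fun p : ℝ × ℝ => F p.1 p.2) (θ, v)) :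
    HasDerivAt (fun t => F t v) (pd1 F θ v) θ :=
  (h.comp (f := fun t => (t, v)) θ (by fun_prop)).hasDerivAt

theorem hasDerivAt_pd2 (h : DifferentiableAt ℝ (fun p : ℝ × ℝ => F p.1 p.2) (θ, v)) :
    HasDerivAt (fun s => F θ s) (pd2 F θ v) v :=
  (h.comp (f := fun s => (θ, s)) v (by fun_prop)).hasDerivAt

theorem pd1_eq_fderiv_apply (h : DifferentiableAt ℝ (fun p : ℝ × ℝ => F p.1 p.2) (θ, v)) :
    pd1 F θ v = fderiv ℝ (fun p : ℝ × ℝ => F p.1 p.2) (θ, v) (1, 0) :=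
  (hasDerivAt_pd1 h).unique
    (h.hasFDerivAt.comp_hasDerivAt (f := fun t => (t, v)) θ
      ((hasDerivAt_id θ).prodMk (hasDerivAt_const θ v)))

theorem contDiffAt_pd1 {m n : WithTop ℕ∞} {x : ℝ × ℝ}
    (h : ContDiffAt ℝ n (fun p : ℝ × ℝ => F p.1 p.2) x) (hmn : m + 1 ≤ n) :
    ContDiffAt ℝ m (fun q : ℝ × ℝ => pd1 F q.1 q.2) x := by
  have hdiff : ∀ᶠ q in 𝓝 x, DifferentiableAt ℝ (fun p : ℝ × ℝ => F p.1 p.2) q :=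
    ((h.of_le (le_add_self.trans hmn)).eventually (by simp)).mono
      fun q hq => hq.differentiableAt one_ne_zero
  exact ((h.fderiv_right hmn).clm_apply contDiffAt_const).congr_of_eventuallyEq
    (hdiff.mono fun q hq => pd1_eq_fderiv_apply hq)

end Partials

section CollidingWaves

variable {I J : Set ℝ} {U : ℝ → ℝ → ℝ}

theorem pd1_mul_exp_neg_eq (hJ : J.OrdConnected)
    (hU : ContDiffOn ℝ 2 (fun p : ℝ × ℝ => U p.1 p.2) (I ×ˢ J))
    (heq : ∀ θ ∈ I, ∀ v ∈ J, pd2 (pd1 U) θ v = pd1 U θ v * pd2 U θ v)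
    {θ : ℝ} (hθ : θ ∈ interior I) :
    ∀ v ∈ interior J, ∀ v' ∈ interior J,
      pd1 U θ v * exp (-U θ v) = pd1 U θ v' * exp (-U θ v') := by
  refine hJ.is_const_interior_of_hasDerivAt_zero fun v hv => ?_
  have hC : ContDiffAt ℝ 2 (fun p : ℝ × ℝ => U p.1 p.2) (θ, v) :=
    hU.contDiffAt (prod_mem_nhds (mem_interior_iff_mem_nhds.1 hθ)
      (mem_interior_iff_mem_nhds.1 hv))
  have hUθ : HasDerivAt (fun s => pd1 U θ s) (pd2 (pd1 U) θ v) v :=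
    hasDerivAt_pd2 ((contDiffAt_pd1 (m := 1) hC le_rfl).differentiableAt one_ne_zero)
  have hUv : HasDerivAt (fun s => U θ s) (pd2 U θ v) v :=
    hasDerivAt_pd2 (hC.differentiableAt two_ne_zero)
  refine (hUθ.mul hUv.neg.exp).congr_deriv ?_
  rw [heq θ (interior_subset hθ) v (interior_subset hv)]
  ring

theorem exp_neg_sub_exp_neg_eq (hI : I.OrdConnected) (hJ : J.OrdConnected)
    (hU : ContDiffOn ℝ 2 (fun p : ℝ × ℝ => U p.1 p.2) (I ×ˢ J))
    (heq : ∀ θ ∈ I, ∀ v ∈ J, pd2 (pd1 U) θ v = pd1 U θ v * pd2 U θ v)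
    {v v' : ℝ} (hv : v ∈ interior J) (hv' : v' ∈ interior J) :
    ∀ θ ∈ I, ∀ θ' ∈ I,
      exp (-U θ v) - exp (-U θ v') = exp (-U θ' v) - exp (-U θ' v') := by
  have hslice : ∀ s ∈ J, ContinuousOn (fun t => U t s) I := fun s hs =>
    hU.continuousOn.comp (continuous_id.prodMk continuous_const).continuousOn fun t ht => ⟨ht, hs⟩
  refine hI.is_const_of_is_const_interior
    ((hslice v (interior_subset hv)).neg.rexp.sub (hslice v' (interior_subset hv')).neg.rexp)
    (hI.is_const_interior_of_hasDerivAt_zero fun θ hθ => ?_)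
  have hdiff : ∀ s ∈ interior J, DifferentiableAt ℝ (fun p : ℝ × ℝ => U p.1 p.2) (θ, s) :=
    fun s hs => (hU.contDiffAt (prod_mem_nhds (mem_interior_iff_mem_nhds.1 hθ)
      (mem_interior_iff_mem_nhds.1 hs))).differentiableAt two_ne_zero
  refine ((hasDerivAt_pd1 (hdiff v hv)).neg.exp.sub
    (hasDerivAt_pd1 (hdiff v' hv')).neg.exp).congr_deriv ?_
  simp only [Pi.neg_apply]
  linarith [pd1_mul_exp_neg_eq hJ hU heq hθ v hv v' hv']

end CollidingWaves

/-- For a `C²` solution of `U_{θv} = U_θ U_v` on a rectangle `I × J`, the jump in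
`e^{-U}` across the strip `θ₋ ≤ θ ≤ θ₊` is independent of `v`:
`e^{-U(θ₊,v)} − e^{-U(θ₋,v)} = e^{-U(θ₊,v₀)} − e^{-U(θ₋,v₀)}`. -/
theorem jump_in_exp_neg_U
    (I J : Set ℝ) (hI : I.OrdConnected) (hJ : J.OrdConnected)
    (U : ℝ → ℝ → ℝ)
    (hU : ContDiffOn ℝ 2 (fun p : ℝ × ℝ => U p.1 p.2) (I ×ˢ J))
    (heq : ∀ θ ∈ I, ∀ v ∈ J, pd2 (pd1 U) θ v = pd1 U θ v * pd2 U θ v)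
    (θm θp : ℝ) (hθm : θm ∈ I) (hθp : θp ∈ I)
    (v₀ v : ℝ) (hv₀ : v₀ ∈ J) (hv : v ∈ J) :
    Real.exp (-(U θp v)) - Real.exp (-(U θm v))
      = Real.exp (-(U θp v₀)) - Real.exp (-(U θm v₀)) := by
  have hslice : ∀ t ∈ I, ContinuousOn (fun s => U t s) J := fun t ht =>
    hU.continuousOn.comp (continuous_const.prodMk continuous_id).continuousOn fun s hs => ⟨ht, hs⟩
  refine hJ.is_const_of_is_const_interior (f := fun s => exp (-U θp s) - exp (-U θm s))
    ((hslice θp hθp).neg.rexp.sub (hslice θm hθm).neg.rexp) (fun s hs s' hs' => ?_) v hv v₀ hv₀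
  linarith [exp_neg_sub_exp_neg_eq hI hJ hU heq hs hs' θp hθp θm hθm]
end

section
/- Define the asymptotic Lagrangian density L[M, U, V, W] = (−2 M_{θv} − 4 U_{θv} + 3 U_θ U_v + V_θ V_v cosh² W + W_θ W_v) e^{-U} for smooth functions M, U, V, W : ℝ² → ℝ of (θ, v). Suppose M, U, V, W satisfy the non-polarized colliding plane wave evolution equations U_{θv} = U_θ U_v, V_{θv} = ½(U_θ V_v + U_v V_θ) − (V_θ W_v + V_v W_θ) tanh W, W_{θv} = ½(U_θ W_v + U_v W_θ) + V_θ V_v sinh W cosh W, and M_{θv} = ½(−U_θ U_v + V_θ V_v cosh² W + W_θ W_v). Then for all smooth compactly supported functions φ_M, φ_U, φ_V, φ_W : ℝ² → ℝ, the function s ↦ ∫_{ℝ²} L[M + s φ_M, U + s φ_U, V + s φ_V, W + s φ_W] dθ dv has derivative zero at s = 0; i.e., solutions of the asymptotic evolution equations are critical points of the asymptotic action. -/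
open Real MeasureTheory

/-- The asymptotic Lagrangian density
`L[M,U,V,W] = (−2M_{θv} − 4U_{θv} + 3U_θ U_v + V_θ V_v cosh² W + W_θ W_v) e^{-U}`. -/
noncomputable def Ldens (M U V W : ℝ → ℝ → ℝ) (θ v : ℝ) : ℝ :=
  (-2 * pd2 (pd1 M) θ v - 4 * pd2 (pd1 U) θ v + 3 * pd1 U θ v * pd2 U θ v
    + pd1 V θ v * pd2 V θ v * (Real.cosh (W θ v))^2 + pd1 W θ v * pd2 W θ v)
  * Real.exp (-(U θ v))

/-!
At `s = 0` the integrand vanishes identically: the `U`- and `M`-equations make the bracket in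
`Ldens M U V W` zero. Hence its `s`-derivative at `0` is the variation of the bracket times
`e^{-U}`, and the `V`- and `W`-equations, together with the symmetry of mixed partials, turn this
into a divergence `∂_θ fluxθ + ∂_v fluxv` of smooth fields supported in the supports of the
variations, whose integral is zero. Differentiating under the integral sign is legitimate because
off that compact set the integrand does not depend on `s`.
-/

open Function Filter Topology
open scoped ContDiff

section PartialDerivatives

variable {F G : ℝ → ℝ → ℝ} {θ v : ℝ}

theorem pd1_eq_fderiv (hF : DifferentiableAt ℝ (uncurry F) (θ, v)) :
    pd1 F θ v = fderiv ℝ (uncurry F) (θ, v) (1, 0) := by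
  have := hF.hasFDerivAt.comp_hasDerivAt θ ((hasDerivAt_id θ).prodMk (hasDerivAt_const θ v))
  exact this.deriv

theorem pd2_eq_fderiv (hF : DifferentiableAt ℝ (uncurry F) (θ, v)) :
    pd2 F θ v = fderiv ℝ (uncurry F) (θ, v) (0, 1) := by
  have := hF.hasFDerivAt.comp_hasDerivAt v ((hasDerivAt_const v θ).prodMk (hasDerivAt_id v))
  exact this.deriv

theorem hasDerivAt_pd1_s19 (hF : DifferentiableAt ℝ (uncurry F) (θ, v)) :
    HasDerivAt (F · v) (pd1 F θ v) θ := by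
  have := hF.hasFDerivAt.comp_hasDerivAt θ ((hasDerivAt_id θ).prodMk (hasDerivAt_const θ v))
  exact this.differentiableAt.hasDerivAt

theorem hasDerivAt_pd2_s19 (hF : DifferentiableAt ℝ (uncurry F) (θ, v)) :
    HasDerivAt (F θ ·) (pd2 F θ v) v := by
  have := hF.hasFDerivAt.comp_hasDerivAt v ((hasDerivAt_const v θ).prodMk (hasDerivAt_id v))
  exact this.differentiableAt.hasDerivAt

theorem contDiff_pd1 {m n : WithTop ℕ∞} (hF : ContDiff ℝ n (uncurry F)) (hmn : m + 1 ≤ n) :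
    ContDiff ℝ m (uncurry (pd1 F)) := by
  convert (hF.fderiv_right hmn).clm_apply contDiff_const with p
  exact pd1_eq_fderiv (hF.differentiable (one_pos.trans_le (le_add_self.trans hmn)).ne' p)

theorem contDiff_pd2 {m n : WithTop ℕ∞} (hF : ContDiff ℝ n (uncurry F)) (hmn : m + 1 ≤ n) :
    ContDiff ℝ m (uncurry (pd2 F)) := by
  convert (hF.fderiv_right hmn).clm_apply contDiff_const with p
  exact pd2_eq_fderiv (hF.differentiable (one_pos.trans_le (le_add_self.trans hmn)).ne' p)

theorem pd1_pd2_comm (hF : ContDiff ℝ 2 (uncurry F)) : pd1 (pd2 F) = pd2 (pd1 F) := by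
  ext θ v
  have hsymm : IsSymmSndFDerivAt ℝ (uncurry F) (θ, v) :=
    hF.contDiffAt.isSymmSndFDerivAt (by simp [minSmoothness_of_isRCLikeNormedField])
  have hF' : Differentiable ℝ (fderiv ℝ (uncurry F)) :=
    (hF.fderiv_right (m := 1) le_rfl).differentiable one_ne_zero
  have hdir (w w' : ℝ × ℝ) : fderiv ℝ (fun p => fderiv ℝ (uncurry F) p w) (θ, v) w'
      = fderiv ℝ (fderiv ℝ (uncurry F)) (θ, v) w' w := by
    rw [fderiv_clm_apply (hF' _) (differentiableAt_const w)]
    simp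
  have hpd1 : pd1 F = fun θ v => fderiv ℝ (uncurry F) (θ, v) (1, 0) :=
    funext₂ fun θ v => pd1_eq_fderiv (hF.differentiable (by simp) _)
  have hpd2 : pd2 F = fun θ v => fderiv ℝ (uncurry F) (θ, v) (0, 1) :=
    funext₂ fun θ v => pd2_eq_fderiv (hF.differentiable (by simp) _)
  rw [pd1_eq_fderiv ((contDiff_pd2 hF le_rfl).differentiable one_ne_zero _),
    pd2_eq_fderiv ((contDiff_pd1 hF le_rfl).differentiable one_ne_zero _), hpd1, hpd2]
  exact (hdir _ _).trans ((hsymm _ _).trans (hdir _ _).symm)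

theorem pd1_add_mul (hF : Differentiable ℝ (uncurry F)) (hG : Differentiable ℝ (uncurry G))
    (s : ℝ) : pd1 (fun θ v => F θ v + s * G θ v) = fun θ v => pd1 F θ v + s * pd1 G θ v := by
  ext θ v
  exact ((hasDerivAt_pd1_s19 (hF _)).add ((hasDerivAt_pd1_s19 (hG _)).const_mul s)).deriv

theorem pd2_add_mul (hF : Differentiable ℝ (uncurry F)) (hG : Differentiable ℝ (uncurry G))
    (s : ℝ) : pd2 (fun θ v => F θ v + s * G θ v) = fun θ v => pd2 F θ v + s * pd2 G θ v := by
  ext θ v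
  exact ((hasDerivAt_pd2_s19 (hF _)).add ((hasDerivAt_pd2_s19 (hG _)).const_mul s)).deriv

theorem Filter.EventuallyEq.pd1 {p : ℝ × ℝ} (h : uncurry F =ᶠ[𝓝 p] uncurry G) :
    uncurry (pd1 F) =ᶠ[𝓝 p] uncurry (pd1 G) := by
  filter_upwards [h.eventually_nhds] with q (hq : uncurry F =ᶠ[𝓝 q] uncurry G)
  exact (hq.comp_tendsto (Continuous.prodMk_left q.2).continuousAt).deriv_eq

theorem Filter.EventuallyEq.pd2 {p : ℝ × ℝ} (h : uncurry F =ᶠ[𝓝 p] uncurry G) :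
    uncurry (pd2 F) =ᶠ[𝓝 p] uncurry (pd2 G) := by
  filter_upwards [h.eventually_nhds] with q (hq : uncurry F =ᶠ[𝓝 q] uncurry G)
  exact (hq.comp_tendsto (Continuous.prodMk_right q.1).continuousAt).deriv_eq

theorem pd2_eq_zero_of_notMem_tsupport {p : ℝ × ℝ} (hp : p ∉ tsupport (uncurry F)) :
    pd2 F p.1 p.2 = 0 := by
  have h : uncurry F =ᶠ[𝓝 p] uncurry fun _ _ => (0 : ℝ) := notMem_tsupport_iff_eventuallyEq.mp hp
  simpa [uncurry_def, pd2] using h.pd2.eq_of_nhds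

theorem eventuallyEq_add_mul_of_notMem_tsupport {p : ℝ × ℝ} (hp : p ∉ tsupport (uncurry G))
    (s : ℝ) : uncurry (fun θ v => F θ v + s * G θ v) =ᶠ[𝓝 p] uncurry F := by
  filter_upwards [notMem_tsupport_iff_eventuallyEq.mp hp] with q hq
  simp_all [uncurry_def]

end PartialDerivatives

theorem integral_fderiv_apply_eq_zero {E : Type*} [NormedAddCommGroup E] [NormedSpace ℝ E]
    [FiniteDimensional ℝ E] [MeasurableSpace E] [BorelSpace E] {μ : Measure E}
    [μ.IsAddHaarMeasure] {g : E → ℝ} (hg : ContDiff ℝ 1 g) (hc : HasCompactSupport g) (w : E) :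
    ∫ x, fderiv ℝ g x w ∂μ = 0 := by
  have hg' : Continuous fun x => fderiv ℝ g x w :=
    (hg.continuous_fderiv one_ne_zero).clm_apply continuous_const
  have := integral_mul_fderiv_eq_neg_fderiv_mul_of_integrable (μ := μ) (f := fun _ => (1 : ℝ))
    (g := g) (v := w) (by simp)
    (by simpa using hg'.integrable_of_hasCompactSupport (hc.fderiv_apply ℝ w))
    (by simpa using hg.continuous.integrable_of_hasCompactSupport hc)
    (fun _ _ => differentiableAt_const _) (fun x _ => hg.differentiable one_ne_zero x)
  simpa using this

theorem integral_pd1_add_pd2_eq_zero {P Q : ℝ → ℝ → ℝ} (hP : ContDiff ℝ 1 (uncurry P))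
    (hPc : HasCompactSupport (uncurry P)) (hQ : ContDiff ℝ 1 (uncurry Q))
    (hQc : HasCompactSupport (uncurry Q)) :
    ∫ p : ℝ × ℝ, (pd1 P p.1 p.2 + pd2 Q p.1 p.2) = 0 := by
  have hint {F : ℝ → ℝ → ℝ} (hF : ContDiff ℝ 1 (uncurry F))
      (hFc : HasCompactSupport (uncurry F)) (w : ℝ × ℝ) :
      Integrable fun p : ℝ × ℝ => fderiv ℝ (uncurry F) p w :=
    ((hF.continuous_fderiv one_ne_zero).clm_apply continuous_const).integrable_of_hasCompactSupport
      (hFc.fderiv_apply ℝ w)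
  simp_rw [pd1_eq_fderiv (hP.differentiable one_ne_zero _),
    pd2_eq_fderiv (hQ.differentiable one_ne_zero _)]
  rw [integral_add (hint hP hPc _) (hint hQ hQc _), integral_fderiv_apply_eq_zero hP hPc,
    integral_fderiv_apply_eq_zero hQ hQc, add_zero]

theorem hasDerivAt_integral_of_contDiff_of_eq_outside_compact {E : Type*}
    [NormedAddCommGroup E] [NormedSpace ℝ E] [MeasurableSpace E] [OpensMeasurableSpace E]
    {μ : Measure E} [IsFiniteMeasureOnCompacts μ] {Φ : ℝ → E → ℝ} {K : Set E} {s₀ : ℝ}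
    (hΦ : ContDiff ℝ 1 (uncurry Φ)) (hK : IsCompact K) (hΦK : ∀ s, ∀ p ∉ K, Φ s p = Φ s₀ p)
    (hint : Integrable (Φ s₀) μ) :
    HasDerivAt (fun s => ∫ p, Φ s p ∂μ) (∫ p, deriv (Φ · p) s₀ ∂μ) s₀ := by
  set Φ' : ℝ → E → ℝ := fun s p => fderiv ℝ (uncurry Φ) (s, p) (1, 0)
  have hderiv (p : E) (s : ℝ) : HasDerivAt (Φ · p) (Φ' s p) s := by
    have := (hΦ.differentiable one_ne_zero (s, p)).hasFDerivAt.comp_hasDerivAt s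
      ((hasDerivAt_id s).prodMk (hasDerivAt_const s p))
    exact this
  have hΦ'_cont : Continuous (uncurry Φ') :=
    (hΦ.continuous_fderiv one_ne_zero).clm_apply continuous_const
  have hΦ'_outside (s : ℝ) (p : E) (hp : p ∉ K) : Φ' s p = 0 := by
    refine (hderiv p s).unique ?_
    rw [show (Φ · p) = fun _ => Φ s₀ p from funext fun s => hΦK s p hp]
    exact hasDerivAt_const s _
  obtain ⟨C, hC⟩ := ((isCompact_closedBall s₀ 1).prod hK).exists_bound_of_continuousOn
    hΦ'_cont.continuousOn
  have hbound (p : E) : ∀ s ∈ Metric.ball s₀ 1, ‖Φ' s p‖ ≤ K.indicator (fun _ => C) p := by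
    intro s hs
    by_cases hp : p ∈ K
    · rw [Set.indicator_of_mem hp]
      exact hC (s, p) ⟨Metric.ball_subset_closedBall hs, hp⟩
    · rw [Set.indicator_of_notMem hp, hΦ'_outside s p hp, norm_zero]
  have := hasDerivAt_integral_of_dominated_loc_of_deriv_le (F := Φ)
    (Metric.ball_mem_nhds s₀ one_pos)
    (.of_forall fun s => (hΦ.continuous.comp (Continuous.prodMk_right s)).aestronglyMeasurable)
    hint (hΦ'_cont.comp (Continuous.prodMk_right s₀)).aestronglyMeasurable
    (.of_forall hbound) ((integrableOn_const hK.measure_lt_top.ne).integrable_indicator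
      hK.measurableSet) (.of_forall fun p s _ => hderiv p s)
  simpa only [(hderiv _ s₀).deriv] using this.2

theorem Ldens_congr {M₁ U₁ V₁ W₁ M₂ U₂ V₂ W₂ : ℝ → ℝ → ℝ} {θ v : ℝ}
    (hM : uncurry M₁ =ᶠ[𝓝 (θ, v)] uncurry M₂) (hU : uncurry U₁ =ᶠ[𝓝 (θ, v)] uncurry U₂)
    (hV : uncurry V₁ =ᶠ[𝓝 (θ, v)] uncurry V₂) (hW : uncurry W₁ =ᶠ[𝓝 (θ, v)] uncurry W₂) :
    Ldens M₁ U₁ V₁ W₁ θ v = Ldens M₂ U₂ V₂ W₂ θ v := by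
  have at_pt {F G : ℝ → ℝ → ℝ} (h : uncurry F =ᶠ[𝓝 (θ, v)] uncurry G) : F θ v = G θ v :=
    h.eq_of_nhds
  simp only [Ldens, at_pt hM.pd1.pd2, at_pt hU.pd1.pd2, at_pt hU.pd1, at_pt hU.pd2, at_pt hV.pd1,
    at_pt hV.pd2, at_pt hW.pd1, at_pt hW.pd2, at_pt hU, at_pt hW]

structure CollidingWaveEquations (M U V W : ℝ → ℝ → ℝ) : Prop where
  eqU : ∀ θ v, pd2 (pd1 U) θ v = pd1 U θ v * pd2 U θ v
  eqV : ∀ θ v, pd2 (pd1 V) θ v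
    = (1/2) * (pd1 U θ v * pd2 V θ v + pd2 U θ v * pd1 V θ v)
      - (pd1 V θ v * pd2 W θ v + pd2 V θ v * pd1 W θ v) * tanh (W θ v)
  eqW : ∀ θ v, pd2 (pd1 W) θ v
    = (1/2) * (pd1 U θ v * pd2 W θ v + pd2 U θ v * pd1 W θ v)
      + pd1 V θ v * pd2 V θ v * sinh (W θ v) * cosh (W θ v)
  eqM : ∀ θ v, pd2 (pd1 M) θ v
    = (1/2) * (-(pd1 U θ v * pd2 U θ v) + pd1 V θ v * pd2 V θ v * cosh (W θ v) ^ 2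
      + pd1 W θ v * pd2 W θ v)

theorem CollidingWaveEquations.Ldens_eq_zero {M U V W : ℝ → ℝ → ℝ}
    (h : CollidingWaveEquations M U V W) (θ v : ℝ) : Ldens M U V W θ v = 0 := by
  rw [Ldens, h.eqM, h.eqU]
  ring

noncomputable def fluxθ (U V W φM φU φV φW : ℝ → ℝ → ℝ) : ℝ → ℝ → ℝ := fun θ v =>
  (-2 * pd2 φM θ v - 4 * pd2 φU θ v + 3 * φU θ v * pd2 U θ v
    + φV θ v * pd2 V θ v * cosh (W θ v) ^ 2 + φW θ v * pd2 W θ v) * exp (-U θ v)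

noncomputable def fluxv (U V W φM φU φV φW : ℝ → ℝ → ℝ) : ℝ → ℝ → ℝ := fun θ v =>
  (-2 * φM θ v * pd1 U θ v - φU θ v * pd1 U θ v
    + φV θ v * pd1 V θ v * cosh (W θ v) ^ 2 + φW θ v * pd1 W θ v) * exp (-U θ v)

noncomputable def firstVariation (M U V W φM φU φV φW : ℝ → ℝ → ℝ) : ℝ → ℝ → ℝ := fun θ v =>
  (-2 * pd2 (pd1 φM) θ v - 4 * pd2 (pd1 φU) θ v
    + 3 * (pd1 φU θ v * pd2 U θ v + pd1 U θ v * pd2 φU θ v)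
    + (pd1 φV θ v * pd2 V θ v + pd1 V θ v * pd2 φV θ v) * cosh (W θ v) ^ 2
    + 2 * pd1 V θ v * pd2 V θ v * cosh (W θ v) * sinh (W θ v) * φW θ v
    + pd1 φW θ v * pd2 W θ v + pd1 W θ v * pd2 φW θ v) * exp (-U θ v)
  - φU θ v * Ldens M U V W θ v

section Variation

variable {M U V W φM φU φV φW : ℝ → ℝ → ℝ}

theorem Ldens_add_mul (hM : ContDiff ℝ 2 (uncurry M)) (hU : ContDiff ℝ 2 (uncurry U))
    (hV : Differentiable ℝ (uncurry V)) (hW : Differentiable ℝ (uncurry W))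
    (hφM : ContDiff ℝ 2 (uncurry φM)) (hφU : ContDiff ℝ 2 (uncurry φU))
    (hφV : Differentiable ℝ (uncurry φV)) (hφW : Differentiable ℝ (uncurry φW)) (s θ v : ℝ) :
    Ldens (fun θ v => M θ v + s * φM θ v) (fun θ v => U θ v + s * φU θ v)
      (fun θ v => V θ v + s * φV θ v) (fun θ v => W θ v + s * φW θ v) θ v
    = (-2 * (pd2 (pd1 M) θ v + s * pd2 (pd1 φM) θ v)
        - 4 * (pd2 (pd1 U) θ v + s * pd2 (pd1 φU) θ v)
        + 3 * (pd1 U θ v + s * pd1 φU θ v) * (pd2 U θ v + s * pd2 φU θ v)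
        + (pd1 V θ v + s * pd1 φV θ v) * (pd2 V θ v + s * pd2 φV θ v)
          * cosh (W θ v + s * φW θ v) ^ 2
        + (pd1 W θ v + s * pd1 φW θ v) * (pd2 W θ v + s * pd2 φW θ v))
      * exp (-(U θ v + s * φU θ v)) := by
  have d0 {F : ℝ → ℝ → ℝ} (hF : ContDiff ℝ 2 (uncurry F)) : Differentiable ℝ (uncurry F) :=
    hF.differentiable two_ne_zero
  have d1 {F : ℝ → ℝ → ℝ} (hF : ContDiff ℝ 2 (uncurry F)) :
      Differentiable ℝ (uncurry (pd1 F)) :=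
    (contDiff_pd1 hF le_rfl).differentiable one_ne_zero
  rw [Ldens, pd1_add_mul (d0 hM) (d0 hφM), pd1_add_mul (d0 hU) (d0 hφU),
    pd2_add_mul (d1 hM) (d1 hφM), pd2_add_mul (d1 hU) (d1 hφU), pd2_add_mul (d0 hU) (d0 hφU),
    pd1_add_mul hV hφV, pd2_add_mul hV hφV, pd1_add_mul hW hφW, pd2_add_mul hW hφW]

theorem Ldens_add_mul_of_notMem_tsupport {p : ℝ × ℝ}
    (hp : p ∉ tsupport (uncurry φM) ∪ tsupport (uncurry φU) ∪ tsupport (uncurry φV)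
      ∪ tsupport (uncurry φW)) (s : ℝ) :
    Ldens (fun θ v => M θ v + s * φM θ v) (fun θ v => U θ v + s * φU θ v)
      (fun θ v => V θ v + s * φV θ v) (fun θ v => W θ v + s * φW θ v) p.1 p.2
    = Ldens M U V W p.1 p.2 := by
  simp only [Set.mem_union, not_or] at hp
  obtain ⟨⟨⟨hM, hU⟩, hV⟩, hW⟩ := hp
  exact Ldens_congr (eventuallyEq_add_mul_of_notMem_tsupport hM s)
    (eventuallyEq_add_mul_of_notMem_tsupport hU s) (eventuallyEq_add_mul_of_notMem_tsupport hV s)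
    (eventuallyEq_add_mul_of_notMem_tsupport hW s)

theorem contDiff_Ldens_add_mul (hM : ContDiff ℝ ∞ (uncurry M)) (hU : ContDiff ℝ ∞ (uncurry U))
    (hV : ContDiff ℝ ∞ (uncurry V)) (hW : ContDiff ℝ ∞ (uncurry W))
    (hφM : ContDiff ℝ ∞ (uncurry φM)) (hφU : ContDiff ℝ ∞ (uncurry φU))
    (hφV : ContDiff ℝ ∞ (uncurry φV)) (hφW : ContDiff ℝ ∞ (uncurry φW)) :
    ContDiff ℝ ∞ (uncurry fun s (p : ℝ × ℝ) =>
      Ldens (fun θ v => M θ v + s * φM θ v) (fun θ v => U θ v + s * φU θ v)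
        (fun θ v => V θ v + s * φV θ v) (fun θ v => W θ v + s * φW θ v) p.1 p.2) := by
  have c1 {F : ℝ → ℝ → ℝ} (hF : ContDiff ℝ ∞ (uncurry F)) : ContDiff ℝ ∞ (uncurry (pd1 F)) :=
    contDiff_pd1 hF le_rfl
  have c2 {F : ℝ → ℝ → ℝ} (hF : ContDiff ℝ ∞ (uncurry F)) : ContDiff ℝ ∞ (uncurry (pd2 F)) :=
    contDiff_pd2 hF le_rfl
  have d0 {F : ℝ → ℝ → ℝ} (hF : ContDiff ℝ ∞ (uncurry F)) : Differentiable ℝ (uncurry F) :=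
    hF.differentiable (by simp)
  simp_rw [uncurry_def, Ldens_add_mul (hM.of_le (by norm_cast)) (hU.of_le (by norm_cast)) (d0 hV)
    (d0 hW) (hφM.of_le (by norm_cast)) (hφU.of_le (by norm_cast)) (d0 hφV) (d0 hφW)]
  -- `fun_prop` takes the smoothness of these partial derivatives from the local context.
  have := c2 (c1 hM); have := c2 (c1 hφM); have := c2 (c1 hU); have := c2 (c1 hφU)
  have := c1 hU; have := c1 hφU; have := c1 hV; have := c1 hφV; have := c1 hW; have := c1 hφW
  have := c2 hU; have := c2 hφU; have := c2 hV; have := c2 hφV; have := c2 hW; have := c2 hφW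
  fun_prop

theorem contDiff_fluxθ (hU : ContDiff ℝ ∞ (uncurry U)) (hV : ContDiff ℝ ∞ (uncurry V))
    (hW : ContDiff ℝ ∞ (uncurry W)) (hφM : ContDiff ℝ ∞ (uncurry φM))
    (hφU : ContDiff ℝ ∞ (uncurry φU)) (hφV : ContDiff ℝ ∞ (uncurry φV))
    (hφW : ContDiff ℝ ∞ (uncurry φW)) : ContDiff ℝ ∞ (uncurry (fluxθ U V W φM φU φV φW)) := by
  have := contDiff_pd2 (m := ∞) hφM le_rfl; have := contDiff_pd2 (m := ∞) hφU le_rfl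
  have := contDiff_pd2 (m := ∞) hU le_rfl; have := contDiff_pd2 (m := ∞) hV le_rfl
  have := contDiff_pd2 (m := ∞) hW le_rfl
  unfold fluxθ
  fun_prop

theorem contDiff_fluxv (hU : ContDiff ℝ ∞ (uncurry U)) (hV : ContDiff ℝ ∞ (uncurry V))
    (hW : ContDiff ℝ ∞ (uncurry W)) (hφM : ContDiff ℝ ∞ (uncurry φM))
    (hφU : ContDiff ℝ ∞ (uncurry φU)) (hφV : ContDiff ℝ ∞ (uncurry φV))
    (hφW : ContDiff ℝ ∞ (uncurry φW)) : ContDiff ℝ ∞ (uncurry (fluxv U V W φM φU φV φW)) := by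
  have := contDiff_pd1 (m := ∞) hU le_rfl; have := contDiff_pd1 (m := ∞) hV le_rfl
  have := contDiff_pd1 (m := ∞) hW le_rfl
  unfold fluxv
  fun_prop

theorem hasCompactSupport_fluxθ (hφM : HasCompactSupport (uncurry φM))
    (hφU : HasCompactSupport (uncurry φU)) (hφV : HasCompactSupport (uncurry φV))
    (hφW : HasCompactSupport (uncurry φW)) :
    HasCompactSupport (uncurry (fluxθ U V W φM φU φV φW)) := by
  refine .intro (((hφM.union hφU).union hφV).union hφW) fun p hp => ?_
  simp only [Set.mem_union, not_or] at hp
  obtain ⟨⟨⟨hM, hU⟩, hV⟩, hW⟩ := hp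
  have hφU0 : φU p.1 p.2 = 0 := image_eq_zero_of_notMem_tsupport (f := uncurry φU) hU
  have hφV0 : φV p.1 p.2 = 0 := image_eq_zero_of_notMem_tsupport (f := uncurry φV) hV
  have hφW0 : φW p.1 p.2 = 0 := image_eq_zero_of_notMem_tsupport (f := uncurry φW) hW
  simp [uncurry_def, fluxθ, pd2_eq_zero_of_notMem_tsupport hM, pd2_eq_zero_of_notMem_tsupport hU,
    hφU0, hφV0, hφW0]

theorem hasCompactSupport_fluxv (hφM : HasCompactSupport (uncurry φM))
    (hφU : HasCompactSupport (uncurry φU)) (hφV : HasCompactSupport (uncurry φV))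
    (hφW : HasCompactSupport (uncurry φW)) :
    HasCompactSupport (uncurry (fluxv U V W φM φU φV φW)) := by
  refine .intro (((hφM.union hφU).union hφV).union hφW) fun p hp => ?_
  simp only [Set.mem_union, not_or] at hp
  obtain ⟨⟨⟨hM, hU⟩, hV⟩, hW⟩ := hp
  have hφM0 : φM p.1 p.2 = 0 := image_eq_zero_of_notMem_tsupport (f := uncurry φM) hM
  have hφU0 : φU p.1 p.2 = 0 := image_eq_zero_of_notMem_tsupport (f := uncurry φU) hU
  have hφV0 : φV p.1 p.2 = 0 := image_eq_zero_of_notMem_tsupport (f := uncurry φV) hV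
  have hφW0 : φW p.1 p.2 = 0 := image_eq_zero_of_notMem_tsupport (f := uncurry φW) hW
  simp [uncurry_def, fluxv, hφM0, hφU0, hφV0, hφW0]

theorem hasDerivAt_Ldens_add_mul (hM : ContDiff ℝ 2 (uncurry M)) (hU : ContDiff ℝ 2 (uncurry U))
    (hV : Differentiable ℝ (uncurry V)) (hW : Differentiable ℝ (uncurry W))
    (hφM : ContDiff ℝ 2 (uncurry φM)) (hφU : ContDiff ℝ 2 (uncurry φU))
    (hφV : Differentiable ℝ (uncurry φV)) (hφW : Differentiable ℝ (uncurry φW)) (θ v : ℝ) :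
    HasDerivAt (fun s => Ldens (fun θ v => M θ v + s * φM θ v) (fun θ v => U θ v + s * φU θ v)
        (fun θ v => V θ v + s * φV θ v) (fun θ v => W θ v + s * φW θ v) θ v)
      (firstVariation M U V W φM φU φV φW θ v) 0 := by
  have hline (a b : ℝ) : HasDerivAt (fun s => a + s * b) b 0 := by
    simpa using ((hasDerivAt_id (0 : ℝ)).mul_const b).const_add a
  simp_rw [Ldens_add_mul hM hU hV hW hφM hφU hφV hφW]
  refine (((((((hline _ _).const_mul (-2)).sub ((hline _ _).const_mul 4)).add
    (((hline _ _).const_mul 3).mul (hline _ _))).add (((hline _ _).mul (hline _ _)).mul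
    ((hline _ _).cosh.pow 2))).add ((hline _ _).mul (hline _ _))).mul
    (hline _ _).neg.exp).congr_deriv ?_
  simp only [firstVariation, Ldens, Pi.add_apply, Pi.sub_apply, Pi.mul_apply, Pi.neg_apply,
    Pi.pow_apply, zero_mul, add_zero]
  ring

theorem CollidingWaveEquations.firstVariation_eq (h : CollidingWaveEquations M U V W)
    (hU : ContDiff ℝ ∞ (uncurry U)) (hV : ContDiff ℝ ∞ (uncurry V))
    (hW : ContDiff ℝ ∞ (uncurry W)) (hφM : ContDiff ℝ ∞ (uncurry φM))
    (hφU : ContDiff ℝ ∞ (uncurry φU)) (hφV : ContDiff ℝ ∞ (uncurry φV))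
    (hφW : ContDiff ℝ ∞ (uncurry φW)) (θ v : ℝ) :
    firstVariation M U V W φM φU φV φW θ v
      = pd1 (fluxθ U V W φM φU φV φW) θ v + pd2 (fluxv U V W φM φU φV φW) θ v := by
  have two {F : ℝ → ℝ → ℝ} (hF : ContDiff ℝ ∞ (uncurry F)) : ContDiff ℝ 2 (uncurry F) :=
    hF.of_le (by norm_cast)
  have d0 {F : ℝ → ℝ → ℝ} (hF : ContDiff ℝ ∞ (uncurry F)) :
      DifferentiableAt ℝ (uncurry F) (θ, v) :=
    hF.differentiable (by simp) _
  have d1 {F : ℝ → ℝ → ℝ} (hF : ContDiff ℝ ∞ (uncurry F)) :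
      DifferentiableAt ℝ (uncurry (pd1 F)) (θ, v) :=
    (contDiff_pd1 (m := ∞) hF le_rfl).differentiable (by simp) _
  have d2 {F : ℝ → ℝ → ℝ} (hF : ContDiff ℝ ∞ (uncurry F)) :
      DifferentiableAt ℝ (uncurry (pd2 F)) (θ, v) :=
    (contDiff_pd2 (m := ∞) hF le_rfl).differentiable (by simp) _
  have hP : pd1 (fluxθ U V W φM φU φV φW) θ v = _ :=
    ((((((hasDerivAt_pd1_s19 (d2 hφM)).const_mul (-2)).sub
      ((hasDerivAt_pd1_s19 (d2 hφU)).const_mul 4)).add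
      (((hasDerivAt_pd1_s19 (d0 hφU)).const_mul 3).mul (hasDerivAt_pd1_s19 (d2 hU)))).add
      (((hasDerivAt_pd1_s19 (d0 hφV)).mul (hasDerivAt_pd1_s19 (d2 hV))).mul
        ((hasDerivAt_pd1_s19 (d0 hW)).cosh.pow 2))).add
      ((hasDerivAt_pd1_s19 (d0 hφW)).mul (hasDerivAt_pd1_s19 (d2 hW)))).mul
      (hasDerivAt_pd1_s19 (d0 hU)).neg.exp |>.deriv
  have hQ : pd2 (fluxv U V W φM φU φV φW) θ v = _ :=
    (((((((hasDerivAt_pd2_s19 (d0 hφM)).const_mul (-2)).mul (hasDerivAt_pd2_s19 (d1 hU))).sub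
      ((hasDerivAt_pd2_s19 (d0 hφU)).mul (hasDerivAt_pd2_s19 (d1 hU)))).add
      (((hasDerivAt_pd2_s19 (d0 hφV)).mul (hasDerivAt_pd2_s19 (d1 hV))).mul
        ((hasDerivAt_pd2_s19 (d0 hW)).cosh.pow 2))).add
      ((hasDerivAt_pd2_s19 (d0 hφW)).mul (hasDerivAt_pd2_s19 (d1 hW)))).mul
      (hasDerivAt_pd2_s19 (d0 hU)).neg.exp) |>.deriv
  rw [firstVariation, h.Ldens_eq_zero, hP, hQ, pd1_pd2_comm (two hφM), pd1_pd2_comm (two hφU),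
    pd1_pd2_comm (two hU), pd1_pd2_comm (two hV), pd1_pd2_comm (two hW), h.eqU, h.eqV, h.eqW,
    tanh_eq_sinh_div_cosh]
  simp only [Pi.add_apply, Pi.sub_apply, Pi.mul_apply, Pi.neg_apply, Pi.pow_apply]
  have := (cosh_pos (W θ v)).ne'
  field_simp
  ring

end Variation

/-- Solutions of the non-polarized colliding plane wave evolution equations are critical
points of the asymptotic action: for all smooth compactly supported variations, the
function `s ↦ ∫ L[M + sφ_M, U + sφ_U, V + sφ_V, W + sφ_W]` has derivative zero at
`s = 0`. -/
theorem asymptotic_action_critical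
    (M U V W : ℝ → ℝ → ℝ)
    (hM : ContDiff ℝ (⊤ : ℕ∞) (fun p : ℝ × ℝ => M p.1 p.2))
    (hU : ContDiff ℝ (⊤ : ℕ∞) (fun p : ℝ × ℝ => U p.1 p.2))
    (hV : ContDiff ℝ (⊤ : ℕ∞) (fun p : ℝ × ℝ => V p.1 p.2))
    (hW : ContDiff ℝ (⊤ : ℕ∞) (fun p : ℝ × ℝ => W p.1 p.2))
    (e1 : ∀ θ v, pd2 (pd1 U) θ v = pd1 U θ v * pd2 U θ v)
    (e2 : ∀ θ v, pd2 (pd1 V) θ v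
        = (1/2) * (pd1 U θ v * pd2 V θ v + pd2 U θ v * pd1 V θ v)
          - (pd1 V θ v * pd2 W θ v + pd2 V θ v * pd1 W θ v) * Real.tanh (W θ v))
    (e3 : ∀ θ v, pd2 (pd1 W) θ v
        = (1/2) * (pd1 U θ v * pd2 W θ v + pd2 U θ v * pd1 W θ v)
          + pd1 V θ v * pd2 V θ v * Real.sinh (W θ v) * Real.cosh (W θ v))
    (e4 : ∀ θ v, pd2 (pd1 M) θ v
        = (1/2) * (-(pd1 U θ v * pd2 U θ v)
            + pd1 V θ v * pd2 V θ v * (Real.cosh (W θ v))^2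
            + pd1 W θ v * pd2 W θ v)) :
    ∀ φM φU φV φW : ℝ → ℝ → ℝ,
      ContDiff ℝ (⊤ : ℕ∞) (fun p : ℝ × ℝ => φM p.1 p.2) →
      HasCompactSupport (fun p : ℝ × ℝ => φM p.1 p.2) →
      ContDiff ℝ (⊤ : ℕ∞) (fun p : ℝ × ℝ => φU p.1 p.2) →
      HasCompactSupport (fun p : ℝ × ℝ => φU p.1 p.2) →
      ContDiff ℝ (⊤ : ℕ∞) (fun p : ℝ × ℝ => φV p.1 p.2) →
      HasCompactSupport (fun p : ℝ × ℝ => φV p.1 p.2) →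
      ContDiff ℝ (⊤ : ℕ∞) (fun p : ℝ × ℝ => φW p.1 p.2) →
      HasCompactSupport (fun p : ℝ × ℝ => φW p.1 p.2) →
      HasDerivAt (fun s : ℝ =>
        ∫ p : ℝ × ℝ,
          Ldens (fun θ v => M θ v + s * φM θ v) (fun θ v => U θ v + s * φU θ v)
            (fun θ v => V θ v + s * φV θ v) (fun θ v => W θ v + s * φW θ v) p.1 p.2)
        0 0 := by
  intro φM φU φV φW hφM hφMc hφU hφUc hφV hφVc hφW hφWc
  have hsol : CollidingWaveEquations M U V W := ⟨e1, e2, e3, e4⟩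
  have hvar := hasDerivAt_integral_of_contDiff_of_eq_outside_compact (μ := volume)
    ((contDiff_Ldens_add_mul hM hU hV hW hφM hφU hφV hφW).of_le (by norm_cast))
    (((hφMc.union hφUc).union hφVc).union hφWc)
    (fun s p hp => (Ldens_add_mul_of_notMem_tsupport hp s).trans
      (Ldens_add_mul_of_notMem_tsupport hp 0).symm)
    (by simp only [zero_mul, add_zero, hsol.Ldens_eq_zero]; exact integrable_zero _ _ _)
  have two {F : ℝ → ℝ → ℝ} (hF : ContDiff ℝ ∞ (uncurry F)) : ContDiff ℝ 2 (uncurry F) :=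
    hF.of_le (by norm_cast)
  have d0 {F : ℝ → ℝ → ℝ} (hF : ContDiff ℝ ∞ (uncurry F)) : Differentiable ℝ (uncurry F) :=
    hF.differentiable (by simp)
  simp_rw [(hasDerivAt_Ldens_add_mul (two hM) (two hU) (d0 hV) (d0 hW) (two hφM) (two hφU)
    (d0 hφV) (d0 hφW) _ _).deriv, hsol.firstVariation_eq hU hV hW hφM hφU hφV hφW] at hvar
  rwa [integral_pd1_add_pd2_eq_zero
    ((contDiff_fluxθ hU hV hW hφM hφU hφV hφW).of_le (by norm_cast))
    (hasCompactSupport_fluxθ hφMc hφUc hφVc hφWc)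
    ((contDiff_fluxv hU hV hW hφM hφU hφV hφW).of_le (by norm_cast))
    (hasCompactSupport_fluxv hφMc hφUc hφVc hφWc)] at hvar
end
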